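/- arXiv:2010.05416 — 5 statements merged into one kernel-verified Lean document; each statement's English description precedes it below -/
import Mathlib

section
/- Let C be a 0-1 matrix that is locally separable, meaning: for every square submatrix M of C of size k ≥ 3 whose rows all come from a distinguished 'coupling' row set, either (i) M has two identical columns, (ii) M has two identical rows, or (iii) the rows and columns of M can be permuted so that M is block upper-triangular with square diagonal blocks of sizes k0 and k - k0 for some 1 ≤ k0 ≤ k - 1; and every row of C not in the coupling set contains at most one nonzero entry. Then C is totally unimodular. -/
/-!
Rows outside `S` have at most one entry `1`, so by `Matrix.IsTotallyUnimodular.fromRows_unitlike`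
only the coupling rows matter. For those, induct on the size of a square submatrix: sizes at most
two are checked directly on 0-1 entries; a larger one has two equal rows or columns, hence
determinant `0`, or after permuting rows and columns it is block upper-triangular, so its
determinant is, up to sign, the product of the determinants of two smaller square submatrices.
-/

namespace SignType

variable {α : Type*} [CommMonoidWithZero α] [HasDistribNeg α]

lemma mul_mem_range_cast {x y : α} (hx : x ∈ Set.range SignType.cast)
    (hy : y ∈ Set.range SignType.cast) : x * y ∈ Set.range SignType.cast :=
  mul_mem (s := MonoidHom.mrange (castHom : SignType →*₀ α).toMonoidHom) hx hy

lemma prod_mem_range_cast {ι : Type*} (s : Finset ι) (x : ι → α)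
    (hx : ∀ i ∈ s, x i ∈ Set.range SignType.cast) : ∏ i ∈ s, x i ∈ Set.range SignType.cast :=
  prod_mem (S := MonoidHom.mrange (castHom : SignType →*₀ α).toMonoidHom) hx

end SignType

lemma Int.cast_units_mem_range_signType_cast {R : Type*} [Ring R] (u : ℤˣ) :
    ((u : ℤ) : R) ∈ Set.range SignType.cast := by
  rcases Int.units_eq_one_or u with rfl | rfl
  exacts [⟨1, by simp⟩, ⟨-1, by simp⟩]

lemma exists_eq_single_signType_of_zero_one {n R : Type*} [DecidableEq n] [Nonempty n]
    [Zero R] [One R] [Neg R] {v : n → R} (h01 : ∀ j, v j = 0 ∨ v j = 1)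
    (hv : ∀ j j', v j ≠ 0 → v j' ≠ 0 → j = j') : ∃ j, ∃ s : SignType, v = Pi.single j (s : R) := by
  by_cases h : ∃ j, v j ≠ 0
  · obtain ⟨j, hj⟩ := h
    refine ⟨j, 1, funext fun j' => ?_⟩
    by_cases hj' : j' = j
    · subst hj'
      simpa using (h01 j').resolve_left hj
    · rw [Pi.single_eq_of_ne hj']
      by_contra hne
      exact hj' (hv j' j hne hj)
  · push Not at h
    exact ⟨Classical.arbitrary n, 0, by ext j; simp [h j]⟩

namespace Matrix

variable {m n R : Type*} [CommRing R]

lemma det_submatrix_perm_mem_range_signType_cast {ι : Type*} [Fintype ι] [DecidableEq ι]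
    {M : Matrix ι ι R} (hM : M.det ∈ Set.range SignType.cast) (σ τ : Equiv.Perm ι) :
    (M.submatrix σ τ).det ∈ Set.range SignType.cast := by
  rw [show M.submatrix σ τ = (M.submatrix id τ).submatrix σ id from rfl, det_permute,
    det_permute', ← mul_assoc]
  exact SignType.mul_mem_range_cast (SignType.mul_mem_range_cast
    (Int.cast_units_mem_range_signType_cast _) (Int.cast_units_mem_range_signType_cast _)) hM

lemma BlockTriangular.det_mem_range_signType_cast {ι α : Type*} [Fintype ι] [DecidableEq ι]
    [LinearOrder α] {M : Matrix ι ι R} {b : ι → α} (hM : M.BlockTriangular b)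
    (hblocks : ∀ a, (M.toSquareBlock b a).det ∈ Set.range SignType.cast) :
    M.det ∈ Set.range SignType.cast := by
  classical
  rw [hM.det]
  exact SignType.prod_mem_range_cast _ _ fun a _ => hblocks a

theorem isTotallyUnimodular_of_det_mem_of_smaller (A : Matrix m n R)
    (h : ∀ k (f : Fin k → m) (g : Fin k → n), f.Injective → g.Injective →
      (∀ (ι : Type) [Fintype ι] [DecidableEq ι], Fintype.card ι < k →
        ∀ (f' : ι → m) (g' : ι → n), f'.Injective → g'.Injective →
          (A.submatrix f' g').det ∈ Set.range SignType.cast) →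
      (A.submatrix f g).det ∈ Set.range SignType.cast) :
    A.IsTotallyUnimodular := by
  intro k
  induction k using Nat.strong_induction_on with
  | _ k ih =>
    intro f g hf hg
    refine h k f g hf hg fun ι _ _ hι f' g' hf' hg' => ?_
    have e := Fintype.equivFin ι
    have := ih _ hι (f' ∘ e.symm) (g' ∘ e.symm) (hf'.comp e.symm.injective)
      (hg'.comp e.symm.injective)
    rwa [← submatrix_submatrix, det_submatrix_equiv_self] at this

def IsSeparable {k : ℕ} (M : Matrix (Fin k) (Fin k) R) : Prop :=
  (∃ j j' : Fin k, j ≠ j' ∧ ∀ i, M i j = M i j') ∨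
  (∃ i i' : Fin k, i ≠ i' ∧ ∀ j, M i j = M i' j) ∨
  (∃ (σ τ : Equiv.Perm (Fin k)) (k0 : ℕ), 1 ≤ k0 ∧ k0 ≤ k - 1 ∧
    ∀ i j : Fin k, k0 ≤ (i : ℕ) → (j : ℕ) < k0 → M (σ i) (τ j) = 0)

def IsLocallySeparable (A : Matrix m n R) : Prop :=
  ∀ k : ℕ, 3 ≤ k → ∀ (r : Fin k → m) (c : Fin k → n), r.Injective → c.Injective →
    (A.submatrix r c).IsSeparable

lemma IsSeparable.det_mem_range_signType_cast {k : ℕ} {M : Matrix (Fin k) (Fin k) R}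
    (hM : M.IsSeparable)
    (hsmaller : ∀ (ι : Type) [Fintype ι] [DecidableEq ι], Fintype.card ι < k →
        ∀ (f g : ι → Fin k), f.Injective → g.Injective →
          (M.submatrix f g).det ∈ Set.range SignType.cast) :
    M.det ∈ Set.range SignType.cast := by
  rcases hM with ⟨j, j', hjj', hcol⟩ | ⟨i, i', hii', hrow⟩ | ⟨σ, τ, k0, hk0, hk0k, hzero⟩
  · exact ⟨0, (det_zero_of_column_eq hjj' hcol).symm⟩
  · exact ⟨0, (det_zero_of_row_eq hii' (funext hrow)).symm⟩
  · have hdet : M = (M.submatrix σ τ).submatrix σ.symm τ.symm := by ext; simp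
    rw [hdet]
    refine det_submatrix_perm_mem_range_signType_cast ?_ _ _
    let b : Fin k → Bool := fun i => decide (k0 ≤ (i : ℕ))
    have hblock : (M.submatrix σ τ).BlockTriangular b := by
      intro i j hij
      simp only [b, Bool.lt_iff, decide_eq_false_iff_not, decide_eq_true_eq, not_le] at hij
      exact hzero i j hij.2 hij.1
    refine hblock.det_mem_range_signType_cast fun a => ?_
    have hlt : Fintype.card {i // b i = a} < k := by
      obtain ⟨x, hx⟩ : ∃ x : Fin k, b x ≠ a := by
        cases a
        · exact ⟨⟨k - 1, by omega⟩, by simpa [b] using hk0k⟩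
        · exact ⟨⟨0, by omega⟩, by simpa [b] using Nat.one_le_iff_ne_zero.mp hk0⟩
      exact (Fintype.card_subtype_lt (p := fun i => b i = a) hx).trans_eq (Fintype.card_fin k)
    exact hsmaller _ hlt _ _ (σ.injective.comp Subtype.val_injective)
      (τ.injective.comp Subtype.val_injective)

lemma det_mem_range_signType_cast_of_zero_one {k : ℕ} (hk : k ≤ 2) (M : Matrix (Fin k) (Fin k) R)
    (h01 : ∀ i j, M i j = 0 ∨ M i j = 1) : M.det ∈ Set.range SignType.cast := by
  rw [SignType.range_eq]
  interval_cases k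
  · simp
  · rcases h01 0 0 with h | h <;> simp [h]
  · rw [det_fin_two]
    rcases h01 0 0 with h₀₀ | h₀₀ <;> rcases h01 0 1 with h₀₁ | h₀₁ <;>
      rcases h01 1 0 with h₁₀ | h₁₀ <;> rcases h01 1 1 with h₁₁ | h₁₁ <;>
      simp [h₀₀, h₀₁, h₁₀, h₁₁]

theorem IsLocallySeparable.isTotallyUnimodular {A : Matrix m n R} (hA : A.IsLocallySeparable)
    (h01 : ∀ i j, A i j = 0 ∨ A i j = 1) : A.IsTotallyUnimodular := by
  refine isTotallyUnimodular_of_det_mem_of_smaller A fun k f g hf hg hsmaller => ?_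
  rcases le_or_gt k 2 with hk | hk
  · exact det_mem_range_signType_cast_of_zero_one hk _ fun i j => h01 _ _
  · refine (hA k hk f g hf hg).det_mem_range_signType_cast fun ι _ _ hι f' g' hf' hg' => ?_
    rw [submatrix_submatrix]
    exact hsmaller ι hι _ _ (hf.comp hf') (hg.comp hg')

lemma isTotallyUnimodular_of_submatrix_of_unitlike_rows [DecidableEq n] {A : Matrix m n R}
    (S : Set m) (hS : (A.submatrix ((↑) : S → m) id).IsTotallyUnimodular)
    (hSc : Nonempty n → ∀ i ∉ S, ∃ j, ∃ s : SignType, A i = Pi.single j (s : R)) :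
    A.IsTotallyUnimodular := by
  classical
  have hsplit : A = (fromRows (A.submatrix ((↑) : S → m) id)
      (A.submatrix ((↑) : {i // i ∉ S} → m) id)).submatrix (Equiv.sumCompl (· ∈ S)).symm id := by
    ext i j
    by_cases hi : i ∈ S <;> simp [hi]
  rw [hsplit]
  exact (hS.fromRows_unitlike fun hn i => hSc hn i.1 i.2).submatrix _ _

end Matrix

/-- A locally separable 0-1 matrix is totally unimodular.  The rows of `A` split into a
distinguished "coupling" set `S` and the remaining rows, each of which has at most one nonzero
entry.  Local separability: every square submatrix of size `k ≥ 3` whose rows all come from `S`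
either (i) has two identical columns, (ii) has two identical rows, or (iii) can be permuted into
block upper-triangular form with square diagonal blocks of sizes `k0` and `k - k0`,
`1 ≤ k0 ≤ k - 1`. -/
theorem tu_of_locally_separable {m n : Type*} (A : Matrix m n ℝ) (S : Set m)
    (h01 : ∀ i j, A i j = 0 ∨ A i j = 1)
    (hnoncoupling : ∀ i ∉ S, ∀ j j' : n, A i j ≠ 0 → A i j' ≠ 0 → j = j')
    (hsep : ∀ k : ℕ, 3 ≤ k → ∀ r : Fin k → m, Function.Injective r → (∀ i, r i ∈ S) →
      ∀ c : Fin k → n, Function.Injective c →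
        (∃ j j' : Fin k, j ≠ j' ∧ ∀ i, A (r i) (c j) = A (r i) (c j')) ∨
        (∃ i i' : Fin k, i ≠ i' ∧ ∀ j, A (r i) (c j) = A (r i') (c j)) ∨
        (∃ (σ τ : Equiv.Perm (Fin k)) (k0 : ℕ), 1 ≤ k0 ∧ k0 ≤ k - 1 ∧
          ∀ i j : Fin k, k0 ≤ (i : ℕ) → (j : ℕ) < k0 → A (r (σ i)) (c (τ j)) = 0)) :
    A.IsTotallyUnimodular := by
  classical
  have hcoupling : (A.submatrix ((↑) : S → m) id).IsLocallySeparable :=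
    fun k hk r c hr hc => hsep k hk _ (Subtype.val_injective.comp hr) (fun i => (r i).2) c hc
  refine Matrix.isTotallyUnimodular_of_submatrix_of_unitlike_rows S
    (hcoupling.isTotallyUnimodular fun i j => h01 _ _) fun _ i hi => ?_
  exact exists_eq_single_signType_of_zero_one (h01 i) (hnoncoupling i hi)
end

section
/- Under the hypotheses t̂ ≥ v_max/d_max + v_min^c/c_max and l ≥ v_max²/(2·d_max) + (v_min^c)²/(2·c_max), with v_min^c ≤ v_{i-1} ≤ v_max and T = a*·t̂ chosen so that D(v_max) ≥ l (a* minimal with this property), there exists θ* ∈ [0, v_max] such that D(θ*) = l, where D(θ) = ∫₀ᵀ v(t;θ) dt for the family of speed curves v(t;θ) defined by v(t;θ) = max(−d_max·t + v_{i-1}, θ, c_max·t + v_min^c − c_max·T) for θ ∈ [0, v_{i-1}] and v(t;θ) = min(c_max·t + v_{i-1}, θ) for θ ∈ (v_{i-1}, v_max]. -/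
/-!
On `[0, T]` the speed curve equals `max m(t) (min (c_max t + v_{i-1}) θ)` with
`m(t) = max (-d_max t + v_{i-1}) (c_max t + v_min^c - c_max T) ≤ v_{i-1}`; this form is jointly
continuous, so `D` is continuous. At `θ = 0` the curve is at most the sum of the positive parts
of the braking and the accelerating ramp, whose areas are `v_{i-1}²/(2 d_max) ≤ v_max²/(2 d_max)`
and `(v_min^c)²/(2 c_max)`; hence `D 0 ≤ l ≤ D v_max` and the intermediate value theorem applies.
-/

open intervalIntegral Set

lemma ite_le_max_min_eq_max_min {m c h θ : ℝ} (hm : m ≤ c) (hh : c ≤ h) :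
    (if θ ≤ c then max m θ else min h θ) = max m (min h θ) := by
  split_ifs with hθ
  · rw [min_eq_right (hθ.trans hh)]
  · rw [max_eq_right (le_min (hm.trans hh) (hm.trans (not_le.1 hθ).le))]

lemma integral_max_neg_mul_add_zero {d v T : ℝ} (hd : 0 < d) (hv : 0 ≤ v) (hT : v / d ≤ T) :
    ∫ t in (0 : ℝ)..T, max (-d * t + v) 0 = v ^ 2 / (2 * d) := by
  have hcont : Continuous fun t : ℝ => max (-d * t + v) 0 := by fun_prop
  have hroot : 0 ≤ v / d := by positivity
  rw [← integral_add_adjacent_intervals (hcont.intervalIntegrable 0 (v / d))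
    (hcont.intervalIntegrable (v / d) T)]
  have hramp : ∫ t in (0 : ℝ)..v / d, max (-d * t + v) 0 = ∫ t in (0 : ℝ)..v / d, (-d * t + v) :=
    integral_congr fun t ht => by
      rw [uIcc_of_le hroot] at ht
      exact max_eq_left (by linarith [(le_div_iff₀ hd).1 ht.2])
  have hrest : ∫ t in v / d..T, max (-d * t + v) 0 = ∫ _ in v / d..T, (0 : ℝ) :=
    integral_congr fun t ht => by
      rw [uIcc_of_le hT] at ht
      exact max_eq_right (by linarith [(div_le_iff₀ hd).1 ht.1])
  rw [hramp, hrest, integral_add ((continuous_const_mul (-d)).intervalIntegrable _ _)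
    intervalIntegrable_const, integral_const_mul, integral_id, integral_const, integral_zero]
  simp only [smul_eq_mul]
  field_simp
  ring

lemma integral_max_mul_add_sub_zero {c w T : ℝ} (hc : 0 < c) (hw : 0 ≤ w) (hT : w / c ≤ T) :
    ∫ t in (0 : ℝ)..T, max (c * t + w - c * T) 0 = w ^ 2 / (2 * c) := by
  have hreflect := integral_comp_sub_left (fun t => max (-c * t + w) 0) (a := 0) (b := T) T
  simp only [sub_self, sub_zero, integral_max_neg_mul_add_zero hc hw hT] at hreflect
  rw [← hreflect]
  congr 1
  ext t
  ring_nf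

lemma max_max_min_zero_le_add (f g h : ℝ) : max (max f g) (min h 0) ≤ max f 0 + max g 0 :=
  max_le (max_le (by linarith [le_max_left f 0, le_max_right g 0])
    (by linarith [le_max_right f 0, le_max_left g 0]))
    ((min_le_right h 0).trans (add_nonneg (le_max_right f 0) (le_max_right g 0)))

lemma continuous_integral_max_min {f g : ℝ → ℝ} (hf : Continuous f) (hg : Continuous g) (a b : ℝ) :
    Continuous fun θ => ∫ t in a..b, max (f t) (min (g t) θ) :=
  continuous_parametric_intervalIntegral_of_continuous' (by fun_prop) a b

section SpeedCurve

variable {v₁ vmin cmax dmax T : ℝ}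

lemma speed_eq_max_min (hv₁ : vmin ≤ v₁) (hc : 0 ≤ cmax) (hd : 0 ≤ dmax) {t : ℝ}
    (ht : t ∈ Icc 0 T) (θ : ℝ) :
    (if θ ≤ v₁ then max (max (-dmax * t + v₁) θ) (cmax * t + vmin - cmax * T)
      else min (cmax * t + v₁) θ) =
      max (max (-dmax * t + v₁) (cmax * t + vmin - cmax * T)) (min (cmax * t + v₁) θ) := by
  rw [max_right_comm]
  refine ite_le_max_min_eq_max_min (max_le ?_ ?_) ?_ <;> nlinarith [ht.1, ht.2]

lemma integral_speed_zero_le (hv₁ : 0 ≤ v₁) (hvmin : 0 ≤ vmin) (hc : 0 < cmax) (hd : 0 < dmax)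
    (hTd : v₁ / dmax ≤ T) (hTc : vmin / cmax ≤ T) :
    ∫ t in (0 : ℝ)..T, max (max (-dmax * t + v₁) (cmax * t + vmin - cmax * T))
      (min (cmax * t + v₁) 0) ≤ v₁ ^ 2 / (2 * dmax) + vmin ^ 2 / (2 * cmax) := by
  have hT : 0 ≤ T := (div_nonneg hvmin hc.le).trans hTc
  have hbrake : Continuous fun t : ℝ => max (-dmax * t + v₁) 0 := by fun_prop
  have haccel : Continuous fun t : ℝ => max (cmax * t + vmin - cmax * T) 0 := by fun_prop
  calc _ ≤ ∫ t in (0 : ℝ)..T, (max (-dmax * t + v₁) 0 + max (cmax * t + vmin - cmax * T) 0) :=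
        integral_mono hT (Continuous.intervalIntegrable (by fun_prop) _ _)
          ((hbrake.add haccel).intervalIntegrable _ _)
          fun t => max_max_min_zero_le_add _ _ _
    _ = v₁ ^ 2 / (2 * dmax) + vmin ^ 2 / (2 * cmax) := by
        rw [integral_add (hbrake.intervalIntegrable _ _) (haccel.intervalIntegrable _ _),
          integral_max_neg_mul_add_zero hd hv₁ hTd, integral_max_mul_add_sub_zero hc hvmin hTc]

end SpeedCurve

/-- Existence of an eligible speed curve (Proposition 4): under the conditions
`t̂ ≥ v_max/d_max + v_min^c/c_max` and `l ≥ v_max²/(2 d_max) + (v_min^c)²/(2 c_max)`, with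
`v_min^c ≤ v_{i-1} ≤ v_max` and travel time `T = a* t̂` chosen so that `D(v_max) ≥ l`, there is a
parameter `θ* ∈ [0, v_max]` whose speed curve covers exactly the distance `l`, i.e.
`D(θ*) = l` where `D(θ) = ∫₀ᵀ v(t;θ) dt`. -/
theorem scg_exists_speed_curve (v1 vmin vmax cmax dmax that T l : ℝ) (a : ℕ) (ha : 0 < a)
    (hT : T = a * that) (hthat : 0 < that)
    (hvmin : 0 < vmin) (hv1 : vmin ≤ v1) (hv2 : v1 ≤ vmax) (hc : 0 < cmax) (hd : 0 < dmax)
    (hthat_cond : that ≥ vmax / dmax + vmin / cmax)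
    (hl : l ≥ vmax ^ 2 / (2 * dmax) + vmin ^ 2 / (2 * cmax))
    (v : ℝ → ℝ → ℝ)
    (hv : ∀ t θ, v t θ =
      if θ ≤ v1 then max (max (-dmax * t + v1) θ) (cmax * t + vmin - cmax * T)
      else min (cmax * t + v1) θ)
    (D : ℝ → ℝ) (hD : ∀ θ, D θ = ∫ t in (0 : ℝ)..T, v t θ)
    (hDmax : D vmax ≥ l) :
    ∃ θstar ∈ Set.Icc (0 : ℝ) vmax, D θstar = l := by
  have hv1_nonneg : 0 ≤ v1 := hvmin.le.trans hv1
  have hT_ge : vmax / dmax + vmin / cmax ≤ T := hthat_cond.trans <| by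
    rw [hT]; exact le_mul_of_one_le_left hthat.le (by exact_mod_cast ha)
  have hTd : v1 / dmax ≤ T := by
    have : v1 / dmax ≤ vmax / dmax := by gcongr
    linarith [div_pos hvmin hc]
  have hTc : vmin / cmax ≤ T := by linarith [div_nonneg (hv1_nonneg.trans hv2) hd.le]
  have hD_eq : ∀ θ, D θ = ∫ t in (0 : ℝ)..T,
      max (max (-dmax * t + v1) (cmax * t + vmin - cmax * T)) (min (cmax * t + v1) θ) :=
    fun θ => (hD θ).trans <| integral_congr fun t ht => by
      rw [uIcc_of_le ((div_pos hvmin hc).le.trans hTc)] at ht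
      simp only [hv, speed_eq_max_min hv1 hc.le hd.le ht]
  have hD_cont : Continuous D := by
    rw [funext hD_eq]
    exact continuous_integral_max_min (by fun_prop) (by fun_prop) _ _
  have hD_zero : D 0 ≤ l := calc
    D 0 ≤ v1 ^ 2 / (2 * dmax) + vmin ^ 2 / (2 * cmax) :=
      (hD_eq 0).trans_le (integral_speed_zero_le hv1_nonneg hvmin.le hc hd hTd hTc)
    _ ≤ vmax ^ 2 / (2 * dmax) + vmin ^ 2 / (2 * cmax) := by gcongr
    _ ≤ l := hl
  exact intermediate_value_Icc (hv1_nonneg.trans hv2) hD_cont.continuousOn ⟨hD_zero, hDmax⟩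
end

section
/- In the directed graph on vertices {0,…,m−1} × {0,…,n−1} (with m, n even, m, n ≥ 2) where horizontal row i has edges directed rightward if i is even and leftward if i is odd, and vertical column j has edges directed downward if j is even and upward if j is odd, every vertex can reach every other vertex (the graph is strongly connected). -/
/-- One step of the alternating one-way grid: vertices are `(row, column)` with row `0` the
bottom.  Row `i` is directed rightward iff `i` is even, column `j` is directed downward
(toward row `0`) iff `j` is even. -/
def gridStep (m n : ℕ) (u v : ℕ × ℕ) : Prop :=
  u.1 < m ∧ u.2 < n ∧ v.1 < m ∧ v.2 < n ∧
    ((u.1 = v.1 ∧ ((u.1 % 2 = 0 ∧ v.2 = u.2 + 1) ∨ (u.1 % 2 = 1 ∧ u.2 = v.2 + 1))) ∨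
     (u.2 = v.2 ∧ ((u.2 % 2 = 0 ∧ u.1 = v.1 + 1) ∨ (u.2 % 2 = 1 ∧ v.1 = u.1 + 1))))

/-
Since `m` and `n` are even, the top row `m - 1` runs leftward and the last column `n - 1` runs
upward, so the boundary of the grid is a directed cycle through the origin `(0, 0)`.  A vertex
follows its own column (down if the column is even, up if it is odd) to the bottom or top row and
then the boundary to the origin; symmetrically, from the origin the boundary leads to the end of
every column at which that column starts, and the column then leads to the vertex.
-/

open Relation

section

variable {m n : ℕ}

theorem reflTransGen_gridStep_even_row {i j j' : ℕ} (hi : i < m) (he : i % 2 = 0)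
    (hjj' : j ≤ j') (hj' : j' < n) : ReflTransGen (gridStep m n) (i, j) (i, j') :=
  (reflTransGen_of_succ_of_le (fun a b ↦ gridStep m n (i, a) (i, b))
      (fun _ hk ↦ ⟨hi, hk.2.trans hj', hi, (Order.succ_le_of_lt hk.2).trans_lt hj',
        .inl ⟨rfl, .inl ⟨he, rfl⟩⟩⟩) hjj').lift
    (Prod.mk i) fun _ _ h ↦ h

theorem reflTransGen_gridStep_odd_row {i j j' : ℕ} (hi : i < m) (ho : i % 2 = 1)
    (hjj' : j ≤ j') (hj' : j' < n) : ReflTransGen (gridStep m n) (i, j') (i, j) :=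
  (reflTransGen_of_succ_of_ge (fun a b ↦ gridStep m n (i, a) (i, b))
      (fun _ hk ↦ ⟨hi, (Order.succ_le_of_lt hk.2).trans_lt hj', hi, hk.2.trans hj',
        .inl ⟨rfl, .inr ⟨ho, rfl⟩⟩⟩) hjj').lift
    (Prod.mk i) fun _ _ h ↦ h

theorem reflTransGen_gridStep_even_col {i i' j : ℕ} (hj : j < n) (he : j % 2 = 0)
    (hii' : i ≤ i') (hi' : i' < m) : ReflTransGen (gridStep m n) (i', j) (i, j) :=
  (reflTransGen_of_succ_of_ge (fun a b ↦ gridStep m n (a, j) (b, j))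
      (fun _ hk ↦ ⟨(Order.succ_le_of_lt hk.2).trans_lt hi', hj, hk.2.trans hi', hj,
        .inr ⟨rfl, .inl ⟨he, rfl⟩⟩⟩) hii').lift
    (·, j) fun _ _ h ↦ h

theorem reflTransGen_gridStep_odd_col {i i' j : ℕ} (hj : j < n) (ho : j % 2 = 1)
    (hii' : i ≤ i') (hi' : i' < m) : ReflTransGen (gridStep m n) (i, j) (i', j) :=
  (reflTransGen_of_succ_of_le (fun a b ↦ gridStep m n (a, j) (b, j))
      (fun _ hk ↦ ⟨hk.2.trans hi', hj, (Order.succ_le_of_lt hk.2).trans_lt hi', hj,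
        .inr ⟨rfl, .inr ⟨ho, rfl⟩⟩⟩) hii').lift
    (·, j) fun _ _ h ↦ h

theorem reflTransGen_gridStep_top_row_origin (hm : Even m) (hm0 : 0 < m) {j : ℕ} (hj : j < n) :
    ReflTransGen (gridStep m n) (m - 1, j) (0, 0) := by
  rw [Nat.even_iff] at hm
  exact (reflTransGen_gridStep_odd_row (by omega) (by omega) j.zero_le hj).trans
    (reflTransGen_gridStep_even_col (by omega) rfl (m - 1).zero_le (by omega))

theorem reflTransGen_gridStep_origin_top_row (hm : Even m) (hn : Even n) (hm0 : 0 < m) {j : ℕ}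
    (hj : j < n) : ReflTransGen (gridStep m n) (0, 0) (m - 1, j) := by
  rw [Nat.even_iff] at hm hn
  exact (reflTransGen_gridStep_even_row (j' := n - 1) hm0 rfl (n - 1).zero_le (by omega)).trans <|
    (reflTransGen_gridStep_odd_col (i' := m - 1) (by omega) (by omega) (m - 1).zero_le
      (by omega)).trans <|
    reflTransGen_gridStep_odd_row (by omega) (by omega) (by omega) (by omega)

theorem reflTransGen_gridStep_to_origin (hm : Even m) (hn : Even n) {u : ℕ × ℕ}
    (hu : u.1 < m ∧ u.2 < n) : ReflTransGen (gridStep m n) u (0, 0) := by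
  obtain ⟨⟨i, j⟩, hi, hj⟩ := u, hu
  rcases Nat.mod_two_eq_zero_or_one j with he | ho
  · rw [Nat.even_iff] at hn
    exact (reflTransGen_gridStep_even_col hj he i.zero_le hi).trans <|
      (reflTransGen_gridStep_even_row (j' := n - 1) (by omega) rfl (by omega) (by omega)).trans <|
      (reflTransGen_gridStep_odd_col (i' := m - 1) (by omega) (by omega) (m - 1).zero_le
        (by omega)).trans <|
      reflTransGen_gridStep_top_row_origin hm (by omega) (by omega)
  · exact (reflTransGen_gridStep_odd_col hj ho (by omega) (by omega)).trans
      (reflTransGen_gridStep_top_row_origin hm (by omega) hj)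

theorem reflTransGen_gridStep_from_origin (hm : Even m) (hn : Even n) {v : ℕ × ℕ}
    (hv : v.1 < m ∧ v.2 < n) : ReflTransGen (gridStep m n) (0, 0) v := by
  obtain ⟨⟨i, j⟩, hi, hj⟩ := v, hv
  rcases Nat.mod_two_eq_zero_or_one j with he | ho
  · exact (reflTransGen_gridStep_origin_top_row hm hn (by omega) hj).trans
      (reflTransGen_gridStep_even_col hj he (by omega) (by omega))
  · exact (reflTransGen_gridStep_even_row (by omega) rfl j.zero_le hj).trans
      (reflTransGen_gridStep_odd_col hj ho i.zero_le hi)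

end

theorem grid_strongly_connected_general (m n : ℕ) (hm : Even m) (hn : Even n)
    (u v : ℕ × ℕ)
    (hu : u.1 < m ∧ u.2 < n) (hv : v.1 < m ∧ v.2 < n) :
    Relation.ReflTransGen (gridStep m n) u v :=
  (reflTransGen_gridStep_to_origin hm hn hu).trans (reflTransGen_gridStep_from_origin hm hn hv)

/-- Global accessibility (Proposition 1): in the alternating one-way grid with `m`, `n` even,
`m, n ≥ 2`, every vertex can reach every other vertex. -/
theorem grid_strongly_connected (m n : ℕ) (hm : Even m) (hn : Even n)
    (hm2 : 2 ≤ m) (hn2 : 2 ≤ n) (u v : ℕ × ℕ)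
    (hu : u.1 < m ∧ u.2 < n) (hv : v.1 < m ∧ v.2 < n) :
    Relation.ReflTransGen (gridStep m n) u v :=
  grid_strongly_connected_general m n hm hn u v hu hv
end

section
/- For a partition of a cycle of length t̂ into a horizontal window of length β·t̂ and a vertical window of length (1−β)·t̂ with 0 < β < 1, if horizontal platoons enter at times k·t̂ (k ∈ ℕ) and occupy the crossroads for duration at most β·t̂, while vertical platoons enter at times (k+β)·t̂ and occupy it for duration at most (1−β)·t̂, and each segment travel time is an integer multiple of t̂, then no horizontal platoon's occupation interval at any crossroads overlaps the interior of any vertical platoon's occupation interval. -/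
/-!
Modulo the cycle `t̂`, the horizontal platoon occupies `[0, β t̂]` and the vertical one
`(β t̂, t̂)`. In absolute time the two windows start at `n t̂ + t_e` and `(m + β) t̂ + t_e` for
integers `n`, `m`: if `n ≤ m` the horizontal window ends before the vertical one opens, and if
`m + 1 ≤ n` the vertical window closes before the horizontal one starts.
-/

open Set

theorem Set.disjoint_Icc_Ioo_of_le_or_le {α : Type*} [LinearOrder α] {a b c d : α}
    (h : b ≤ c ∨ d ≤ a) : Disjoint (Icc a b) (Ioo c d) := by
  rcases h with hbc | hda
  · exact (Iic_disjoint_Ioi hbc).mono Icc_subset_Iic_self Ioo_subset_Ioi_self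
  · exact (Iio_disjoint_Ici hda).symm.mono Icc_subset_Ici_self Ioo_subset_Iio_self

theorem disjoint_Icc_Ioo_periodic_windows {α : Type*} [CommRing α] [LinearOrder α]
    [IsStrictOrderedRing α] {T : α} (hT : 0 ≤ T) (β t : α) (n m : ℤ) :
    Disjoint (Icc (n * T + t) (n * T + t + β * T)) (Ioo ((m + β) * T + t) ((m + 1) * T + t)) := by
  apply disjoint_Icc_Ioo_of_le_or_le
  rcases le_or_gt n m with hnm | hmn
  · have hnm' : (n : α) * T ≤ m * T := mul_le_mul_of_nonneg_right (by exact_mod_cast hnm) hT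
    left
    linear_combination hnm'
  · have hmn' : ((m : α) + 1) * T ≤ n * T :=
      mul_le_mul_of_nonneg_right (by exact_mod_cast Int.add_one_le_of_lt hmn) hT
    right
    linear_combination hmn'

theorem imbalanced_rhythm_no_conflict_general (that β t_e : ℝ) (hthat : 0 < that) (a : ℕ)
    (k_h k_v c_h c_v : ℕ) :
    Set.Icc ((k_h + a * c_h) * that + t_e) ((k_h + a * c_h) * that + t_e + β * that) ∩
      Set.Ioo ((k_v + β + a * c_v) * that + t_e) ((k_v + 1 + a * c_v) * that + t_e) = ∅ := by
  have h := disjoint_Icc_Ioo_periodic_windows hthat.le β t_e (k_h + a * c_h) (k_v + a * c_v)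
  push_cast at h
  rw [add_right_comm (k_v : ℝ) β, add_right_comm (k_v : ℝ) 1]
  exact disjoint_iff_inter_eq_empty.mp h

/-- Imbalanced-demand rhythm (Section 4.2): with window split `β ∈ (0,1)`, a horizontal platoon
entering at `k_h t̂` occupies a crossroads during
`[(k_h + a c_h) t̂ + t_e, (k_h + a c_h) t̂ + t_e + β t̂]`, and a vertical platoon entering at
`(k_v + β) t̂` occupies it during `[(k_v + β + a c_v) t̂ + t_e, (k_v + 1 + a c_v) t̂ + t_e]`.
No horizontal occupation interval meets the interior of any vertical occupation interval. -/
theorem imbalanced_rhythm_no_conflict (that β t_e : ℝ) (hthat : 0 < that)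
    (hβ0 : 0 < β) (hβ1 : β < 1) (hte : 0 ≤ t_e) (a : ℕ) (ha : 0 < a)
    (k_h k_v c_h c_v : ℕ) :
    Set.Icc ((k_h + a * c_h) * that + t_e) ((k_h + a * c_h) * that + t_e + β * that) ∩
      Set.Ioo ((k_v + β + a * c_v) * that + t_e) ((k_v + 1 + a * c_v) * that + t_e) = ∅ :=
  imbalanced_rhythm_no_conflict_general that β t_e hthat a k_h k_v c_h c_v
end

section
/- On the alternating one-way grid directed graph on {0,…,m−1} × {0,…,n−1} with m, n even and unit edge lengths, for every pair of vertices u, v the directed shortest-path distance d(u,v) satisfies d(u,v) ≤ d_M(u,v) + 2(m + n), where d_M is the Manhattan (ℓ¹) distance. -/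
/-- `reachIn step k u v` holds iff there is a directed walk of length exactly `k` from `u`
to `v`. -/
def reachIn {α : Type*} (step : α → α → Prop) : ℕ → α → α → Prop
  | 0, u, v => u = v
  | k + 1, u, v => ∃ w, step u w ∧ reachIn step k w v

section Reach

variable {α β : Type*} {s : α → α → Prop} {t : β → β → Prop}

theorem reachIn.trans : ∀ {k l : ℕ} {u w v : α},
    reachIn s k u w → reachIn s l w v → reachIn s (k + l) u v
  | 0, _, _, _, _, rfl, h => by rwa [Nat.zero_add]
  | _ + 1, _, _, _, _, ⟨x, hux, hxw⟩, h => by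
      rw [Nat.add_right_comm]
      exact ⟨x, hux, hxw.trans h⟩

theorem reachIn.map {f : α → β} (hf : ∀ x y, s x y → t (f x) (f y)) :
    ∀ {k : ℕ} {u v : α}, reachIn s k u v → reachIn t k (f u) (f v)
  | 0, _, _, rfl => rfl
  | _ + 1, _, _, ⟨x, hux, hxv⟩ => ⟨f x, hf _ _ hux, hxv.map hf⟩

def reachWithin (s : α → α → Prop) (d : ℕ) (u v : α) : Prop :=
  ∃ k ≤ d, reachIn s k u v

theorem reachWithin.refl (u : α) : reachWithin s 0 u u :=
  ⟨0, le_rfl, rfl⟩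

theorem reachWithin.single {u v : α} (h : s u v) : reachWithin s 1 u v :=
  ⟨1, le_rfl, v, h, rfl⟩

theorem reachWithin.mono {d e : ℕ} {u v : α} (h : reachWithin s d u v) (hde : d ≤ e) :
    reachWithin s e u v :=
  let ⟨k, hk, hr⟩ := h
  ⟨k, hk.trans hde, hr⟩

theorem reachWithin.trans {d e : ℕ} {u w v : α} (h₁ : reachWithin s d u w)
    (h₂ : reachWithin s e w v) : reachWithin s (d + e) u v :=
  let ⟨k, hk, hr₁⟩ := h₁
  let ⟨l, hl, hr₂⟩ := h₂
  ⟨k + l, Nat.add_le_add hk hl, hr₁.trans hr₂⟩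

theorem reachWithin.map {f : α → β} (hf : ∀ x y, s x y → t (f x) (f y)) {d : ℕ} {u v : α}
    (h : reachWithin s d u v) : reachWithin t d (f u) (f v) :=
  let ⟨k, hk, hr⟩ := h
  ⟨k, hk, hr.map hf⟩

end Reach

section Grid

variable {m n : ℕ}

theorem gridStep_right {i j : ℕ} (hi : i < m) (hi2 : i % 2 = 0) (hj : j + 1 < n) :
    gridStep m n (i, j) (i, j + 1) := by
  unfold gridStep; omega

theorem gridStep_left {i j : ℕ} (hi : i < m) (hi2 : i % 2 = 1) (hj : j + 1 < n) :
    gridStep m n (i, j + 1) (i, j) := by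
  unfold gridStep; omega

theorem gridStep_down {i j : ℕ} (hi : i + 1 < m) (hj : j < n) (hj2 : j % 2 = 0) :
    gridStep m n (i + 1, j) (i, j) := by
  unfold gridStep; omega

theorem gridStep_up {i j : ℕ} (hi : i + 1 < m) (hj : j < n) (hj2 : j % 2 = 1) :
    gridStep m n (i, j) (i + 1, j) := by
  unfold gridStep; omega

theorem reachWithin_right {i c b : ℕ} (hi : i < m) (hi2 : i % 2 = 0) (hcb : c ≤ b)
    (hb : b < n) :
    reachWithin (gridStep m n) (b - c) (i, c) (i, b) := by
  induction b, hcb using Nat.le_induction with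
  | base => simpa using reachWithin.refl _
  | succ b hcb ih =>
      exact ((ih (by omega)).trans (.single (gridStep_right hi hi2 hb))).mono (by omega)

theorem reachWithin_up {i a j : ℕ} (hj : j < n) (hj2 : j % 2 = 1) (hia : i ≤ a) (ha : a < m) :
    reachWithin (gridStep m n) (a - i) (i, j) (a, j) := by
  induction a, hia using Nat.le_induction with
  | base => simpa using reachWithin.refl _
  | succ a hia ih =>
      exact ((ih (by omega)).trans (.single (gridStep_up ha hj hj2))).mono (by omega)

def halfTurn (m n : ℕ) (p : ℕ × ℕ) : ℕ × ℕ :=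
  (m - 1 - p.1, n - 1 - p.2)

theorem halfTurn_halfTurn {p : ℕ × ℕ} (hp : p.1 < m ∧ p.2 < n) :
    halfTurn m n (halfTurn m n p) = p := by
  unfold halfTurn; ext <;> omega

theorem gridStep_halfTurn (hm : m % 2 = 0) (hn : n % 2 = 0) {u v : ℕ × ℕ}
    (h : gridStep m n u v) : gridStep m n (halfTurn m n u) (halfTurn m n v) := by
  unfold gridStep halfTurn at *; omega

theorem reachWithin_of_halfTurn (hm : m % 2 = 0) (hn : n % 2 = 0) {d : ℕ} {u v : ℕ × ℕ}
    (hu : u.1 < m ∧ u.2 < n) (hv : v.1 < m ∧ v.2 < n)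
    (h : reachWithin (gridStep m n) d (halfTurn m n u) (halfTurn m n v)) :
    reachWithin (gridStep m n) d u v := by
  simpa only [halfTurn_halfTurn hu, halfTurn_halfTurn hv] using
    h.map fun _ _ hstep => gridStep_halfTurn hm hn hstep

theorem reachWithin_left (hm : m % 2 = 0) (hn : n % 2 = 0) {i c b : ℕ} (hi : i < m)
    (hi2 : i % 2 = 1) (hbc : b ≤ c) (hc : c < n) :
    reachWithin (gridStep m n) (c - b) (i, c) (i, b) :=
  reachWithin_of_halfTurn hm hn ⟨hi, hc⟩ ⟨hi, by omega⟩ <|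
    (reachWithin_right (by omega) (by omega) (by omega) (by omega)).mono (by omega)

theorem exists_reachWithin_row_of_le (hn : n % 2 = 0) {i j r : ℕ} (hi : i < m) (hj : j < n)
    (hir : i ≤ r) (hr : r < m) :
    ∃ j' < n, Nat.dist j j' ≤ 1 ∧ reachWithin (gridStep m n) (r - i + 3) (i, j) (r, j') := by
  unfold Nat.dist
  rcases Nat.mod_two_eq_zero_or_one j with hj2 | hj2
  · rcases Nat.mod_two_eq_zero_or_one i with hi2 | hi2
    · have hright := gridStep_right hi hi2 (show j + 1 < n by omega)
      exact ⟨j + 1, by omega, by omega,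
        ((reachWithin.single hright).trans (reachWithin_up (by omega) (by omega) hir hr)).mono
          (by omega)⟩
    obtain ⟨i, rfl⟩ : ∃ i₀, i = i₀ + 1 := ⟨i - 1, by omega⟩
    rcases j with _ | j
    · have hright := gridStep_right (j := 0) (n := n) (show i < m by omega) (by omega) (by omega)
      exact ⟨1, by omega, by omega,
        (((reachWithin.single (gridStep_down hi hj hj2)).trans (.single hright)).trans
          (reachWithin_up (by omega) (by omega) (by omega) hr)).mono (by omega)⟩
    · exact ⟨j, by omega, by omega,
        ((reachWithin.single (gridStep_left hi hi2 hj)).trans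
          (reachWithin_up (by omega) (by omega) hir hr)).mono (by omega)⟩
  · exact ⟨j, hj, by omega, (reachWithin_up hj hj2 hir hr).mono (by omega)⟩

theorem exists_reachWithin_row (hm : m % 2 = 0) (hn : n % 2 = 0) {i j r : ℕ} (hi : i < m)
    (hj : j < n) (hr : r < m) :
    ∃ j' < n, Nat.dist j j' ≤ 1 ∧
      reachWithin (gridStep m n) (Nat.dist i r + 3) (i, j) (r, j') := by
  rcases le_total i r with hir | hri
  · obtain ⟨j', hj', hjj', h⟩ := exists_reachWithin_row_of_le hn hi hj hir hr
    exact ⟨j', hj', hjj', h.mono (by unfold Nat.dist; omega)⟩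
  obtain ⟨j', hj', hjj', h⟩ := exists_reachWithin_row_of_le (m := m) (i := m - 1 - i)
    (j := n - 1 - j) (r := m - 1 - r) hn (by omega) (by omega) (by omega) (by omega)
  have hend : (m - 1 - r, j') = halfTurn m n (r, n - 1 - j') := by
    unfold halfTurn; ext <;> omega
  refine ⟨n - 1 - j', by omega, by unfold Nat.dist at *; omega, ?_⟩
  rw [hend] at h
  exact reachWithin_of_halfTurn hm hn ⟨hi, hj⟩ ⟨hr, by omega⟩
    (h.mono (by unfold Nat.dist; omega))

theorem reachWithin_succ_row (hm : m % 2 = 0) (hn : n % 2 = 0) {a c b : ℕ} (ha : a + 1 < m)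
    (ha2 : a % 2 = 0) (hc : c < n) (hb : b < n) (hcb : c ≤ b + 1) :
    reachWithin (gridStep m n) (Nat.dist c b + 3) (a, c) (a + 1, b) := by
  obtain ⟨b', hb'2, hb', hcb', hbb', hcost⟩ :
      ∃ b', b' % 2 = 1 ∧ b' < n ∧ c ≤ b' ∧ b ≤ b' ∧ b' - c + 1 + (b' - b) ≤ Nat.dist c b + 3 := by
    unfold Nat.dist
    by_cases hodd : b % 2 = 1 ∧ c ≤ b
    · exact ⟨b, by omega⟩
    rcases Nat.mod_two_eq_zero_or_one b with hb2 | hb2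
    · exact ⟨b + 1, by omega⟩
    · exact ⟨b + 2, by omega⟩
  have hride := reachWithin_right (m := m) (by omega) ha2 hcb' hb'
  exact ((hride.trans (.single (gridStep_up ha hb' hb'2))).trans
    (reachWithin_left hm hn ha (by omega) hbb' hb')).mono hcost

theorem reachWithin_dist_add_eight (hm : m % 2 = 0) (hn : n % 2 = 0) {u v : ℕ × ℕ}
    (hu : u.1 < m ∧ u.2 < n) (hv : v.1 < m ∧ v.2 < n)
    (htoward : v.1 % 2 = 0 ∧ u.2 < v.2 ∨ v.1 % 2 = 1 ∧ u.2 ≤ v.2) :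
    reachWithin (gridStep m n) (Nat.dist u.1 v.1 + Nat.dist u.2 v.2 + 8) u v := by
  obtain ⟨i, j⟩ := u
  obtain ⟨a, b⟩ := v
  obtain ⟨hi, hj⟩ := hu
  obtain ⟨ha, hb⟩ := hv
  rcases htoward with ⟨ha2, hjb⟩ | ⟨ha2, hjb⟩
  · obtain ⟨j', hj', hjj', h⟩ := exists_reachWithin_row hm hn hi hj ha
    unfold Nat.dist at *
    exact (h.trans (reachWithin_right ha ha2 (by omega : j' ≤ b) hb)).mono (by omega)
  · obtain ⟨a, rfl⟩ : ∃ a₀, a = a₀ + 1 := ⟨a - 1, by omega⟩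
    obtain ⟨j', hj', hjj', h⟩ := exists_reachWithin_row (r := a) hm hn hi hj (by omega)
    have hfin :=
      reachWithin_succ_row hm hn ha (by omega) hj' hb (by unfold Nat.dist at *; omega)
    unfold Nat.dist at *
    exact (h.trans hfin).mono (by omega)

end Grid

theorem grid_detour_bound_general (m n : ℕ) (hm : Even m) (hn : Even n)
    (u v : ℕ × ℕ) (hu : u.1 < m ∧ u.2 < n) (hv : v.1 < m ∧ v.2 < n) :
    ∃ k : ℕ, reachIn (gridStep m n) k u v ∧
      k ≤ Nat.dist u.1 v.1 + Nat.dist u.2 v.2 + 2 * (m + n) := by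
  have hm' : m % 2 = 0 := Nat.even_iff.mp hm
  have hn' : n % 2 = 0 := Nat.even_iff.mp hn
  have hwithin : reachWithin (gridStep m n) (Nat.dist u.1 v.1 + Nat.dist u.2 v.2 + 8) u v := by
    by_cases htoward : v.1 % 2 = 0 ∧ u.2 < v.2 ∨ v.1 % 2 = 1 ∧ u.2 ≤ v.2
    · exact reachWithin_dist_add_eight hm' hn' hu hv htoward
    have h := reachWithin_dist_add_eight hm' hn' (u := halfTurn m n u) (v := halfTurn m n v)
      (by unfold halfTurn; omega) (by unfold halfTurn; omega) (by unfold halfTurn; omega)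
    refine reachWithin_of_halfTurn hm' hn' hu hv (h.mono ?_)
    unfold halfTurn Nat.dist
    omega
  obtain ⟨k, hk, hr⟩ := hwithin
  exact ⟨k, hr, by omega⟩

/-- Detour bound: on the alternating one-way grid with `m`, `n` even (`m, n ≥ 2`) and unit edge
lengths, the directed shortest-path distance between any two grid vertices exceeds their
Manhattan distance by at most `2(m + n)`: there is a directed path of length at most
`d_M(u,v) + 2(m + n)`. -/
theorem grid_detour_bound (m n : ℕ) (hm : Even m) (hn : Even n) (hm2 : 2 ≤ m) (hn2 : 2 ≤ n)
    (u v : ℕ × ℕ) (hu : u.1 < m ∧ u.2 < n) (hv : v.1 < m ∧ v.2 < n) :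
    ∃ k : ℕ, reachIn (gridStep m n) k u v ∧
      k ≤ Nat.dist u.1 v.1 + Nat.dist u.2 v.2 + 2 * (m + n) :=
  grid_detour_bound_general m n hm hn u v hu hv
end
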